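/- arXiv:2101.01136 — 8 statements merged into one kernel-verified Lean document; each statement's English description precedes it below -/
import Mathlib

section
/- Let d and n be positive integers with n ≥ 2. If there exist positive integers x and y with gcd(x, y) = 1 satisfying (x−d)² + x² + (x+d)² = yⁿ, then n is odd. -/
theorem stmt_4 (d n : ℕ) (hd : 0 < d) (hn : 2 ≤ n)
    (h : ∃ x y : ℕ, 0 < x ∧ 0 < y ∧ Nat.Coprime x y ∧
      ((x : ℤ) - d) ^ 2 + (x : ℤ) ^ 2 + ((x : ℤ) + d) ^ 2 = (y : ℤ) ^ n) :
    Odd n := by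
  obtain ⟨x, y, hx, hy, hxy, heq⟩ := h
  rcases Nat.even_or_odd n with he | ho
  · exfalso
    obtain ⟨m, hm⟩ := he
    have hm1 : 1 ≤ m := by omega
    set z : ℤ := (y : ℤ) ^ m with hzdef
    have hz : 3 * (x : ℤ) ^ 2 + 2 * (d : ℤ) ^ 2 = z ^ 2 := by
      have : (y : ℤ) ^ n = z ^ 2 := by rw [hzdef, ← pow_mul]; congr 1; omega
      rw [this] at heq; ring_nf at heq ⊢; linarith
    by_cases h3d : (3 : ℤ) ∣ (d : ℤ)
    · -- then 3 ∣ z, 3 ∣ x, 3 ∣ y, contradicting coprimality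
      have h3z : (3 : ℤ) ∣ z := by
        have : (3 : ℤ) ∣ z ^ 2 := by
          obtain ⟨e, he⟩ := h3d
          refine ⟨x ^ 2 + 6 * e ^ 2, ?_⟩
          rw [← hz, he]; ring
        exact Int.Prime.dvd_pow' (by norm_num) this
      have h3y : (3 : ℤ) ∣ (y : ℤ) := by
        have : (3 : ℤ) ∣ (y : ℤ) ^ m := h3z
        exact Int.Prime.dvd_pow' (by norm_num) this
      have h3x : (3 : ℤ) ∣ (x : ℤ) := by
        have h9 : (9 : ℤ) ∣ 3 * (x : ℤ) ^ 2 := by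
          obtain ⟨e, he⟩ := h3d
          obtain ⟨f, hf⟩ := h3z
          refine ⟨f ^ 2 - 2 * e ^ 2, ?_⟩
          have : 3 * (x : ℤ) ^ 2 = z ^ 2 - 2 * (d:ℤ) ^ 2 := by linarith
          rw [this, he, hf]; ring
        have : (3 : ℤ) ∣ (x : ℤ) ^ 2 := by
          obtain ⟨c, hc⟩ := h9
          exact ⟨c, by linarith⟩
        exact Int.Prime.dvd_pow' (by norm_num) this
      have hx3 : (3 : ℕ) ∣ x := by exact_mod_cast h3x
      have hy3 : (3 : ℕ) ∣ y := by exact_mod_cast h3y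
      have : (3 : ℕ) ∣ 1 := hxy ▸ Nat.dvd_gcd hx3 hy3
      omega
    · -- z² ≡ 2 mod 3, impossible
      have hdn : ¬ (3 : ℕ) ∣ d := fun hc => h3d (by exact_mod_cast hc)
      have hd3 : ((d : ℕ) : ZMod 3) ≠ 0 := by
        rw [Ne, ZMod.natCast_eq_zero_iff]; exact hdn
      have hcast : (3 : ZMod 3) * (x : ZMod 3) ^ 2 + 2 * (d : ZMod 3) ^ 2
          = ((z : ZMod 3)) ^ 2 := by
        have h' := congrArg (fun t : ℤ => (t : ZMod 3)) hz
        push_cast at h'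
        convert h' using 2 <;> push_cast <;> ring
      have key2 : ∀ a b c : ZMod 3, a ≠ 0 → 3 * c ^ 2 + 2 * a ^ 2 ≠ b ^ 2 := by decide
      exact key2 ((d : ℕ) : ZMod 3) ((z : ℤ) : ZMod 3) ((x : ℕ) : ZMod 3) hd3 hcast
  · exact ho
end

section
/- Let p > 3 be a prime, let X be an odd positive integer with p ∤ X, let s be a positive integer and m a nonnegative integer. Then |9X² − 2p^{2s}| ≠ p^m. -/
lemma odd_sq_zmod8 (n : ℕ) (h : Odd n) : ((n : ZMod 8))^2 = 1 := by
  obtain ⟨k, hk⟩ := h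
  have key : ∀ z : ZMod 8, (2*z+1)^2 = 1 := by decide
  subst hk
  push_cast
  exact key _

lemma aux_dvd (p X s n : ℕ) (hp : p.Prime) (hp3 : 3 < p) (hpX : ¬ p ∣ X) (hs : 0 < s)
    (h1 : (p : ℤ) ∣ 9 * (X : ℤ) ^ 2 - 2 * (p : ℤ) ^ (2 * s)) : False := by
  have h2' : (p : ℤ) ∣ 2 * (p : ℤ) ^ (2 * s) :=
    Dvd.dvd.mul_left (dvd_pow_self _ (by omega)) 2
  have hdvd : (p : ℤ) ∣ 9 * (X : ℤ)^2 := by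
    have := dvd_add h1 h2'; simpa using this
  have hdvdn : p ∣ 9 * X^2 := by exact_mod_cast hdvd
  rcases (Nat.Prime.dvd_mul hp).mp hdvdn with h9 | hx2
  · have h3 : p ∣ 3 := hp.dvd_of_dvd_pow (n := 2) (by norm_num; exact h9)
    have := (Nat.prime_dvd_prime_iff_eq hp Nat.prime_three).mp h3
    omega
  · exact hpX (hp.dvd_of_dvd_pow hx2)

theorem stmt_8 (p X s m : ℕ) (hp : p.Prime) (hp3 : 3 < p)
    (hX : 0 < X) (hXodd : Odd X) (hpX : ¬ p ∣ X) (hs : 0 < s) :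
    |9 * (X : ℤ) ^ 2 - 2 * (p : ℤ) ^ (2 * s)| ≠ (p : ℤ) ^ m := by
  intro h
  have hpodd : Odd p := hp.odd_of_ne_two (by omega)
  rcases (abs_eq (pow_nonneg (by positivity) m)).mp h with h1 | h1
  · cases m with
    | zero =>
        -- 9X² - 2p^{2s} = 1 : contradiction mod 8
        rw [pow_zero] at h1
        have h8 := congrArg (fun z : ℤ => (z : ZMod 8)) h1
        push_cast at h8
        rw [pow_mul, odd_sq_zmod8 X hXodd, odd_sq_zmod8 p hpodd] at h8
        rw [one_pow] at h8
        exact absurd h8 (by decide)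
    | succ n =>
        exact aux_dvd p X s n hp hp3 hpX hs
          (h1 ▸ dvd_pow_self (p:ℤ) (Nat.succ_ne_zero n))
  · cases m with
    | zero =>
        -- 9X² - 2p^{2s} = -1 : contradiction mod 3
        rw [pow_zero] at h1
        have h3 := congrArg (fun z : ℤ => (z : ZMod 3)) h1
        push_cast at h3
        rw [pow_mul'] at h3
        revert h3
        have key : ∀ w z : ZMod 3, ¬ (9 * w^2 - 2 * z^2 = -1) := by decide
        exact key _ _
    | succ n =>
        exact aux_dvd p X s n hp hp3 hpX hs
          (h1 ▸ (dvd_pow_self (p:ℤ) (Nat.succ_ne_zero n)).neg_right)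
end

section
/- There are no positive integers X and s with 5 ∤ X such that 9X⁴ − 12·5^{2s}·X² + 4·5^{4s−1} = 1 or 9X⁴ − 12·5^{2s}·X² + 4·5^{4s−1} = −1. -/
theorem stmt_10 : ¬ ∃ X s : ℕ, 0 < X ∧ 0 < s ∧ ¬ (5 ∣ X) ∧
    (9 * (X : ℤ) ^ 4 - 12 * 5 ^ (2 * s) * (X : ℤ) ^ 2 + 4 * 5 ^ (4 * s - 1) = 1 ∨
     9 * (X : ℤ) ^ 4 - 12 * 5 ^ (2 * s) * (X : ℤ) ^ 2 + 4 * 5 ^ (4 * s - 1) = -1) := by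
  rintro ⟨X, s, hX, hs, h5, h | h⟩
  · -- mod 5
    have hx : (X : ZMod 5) ≠ 0 := by
      rw [Ne, ZMod.natCast_eq_zero_iff]
      exact h5
    have h2 := congrArg (Int.cast : ℤ → ZMod 5) h
    push_cast at h2
    rw [show ((5 : ZMod 5)) = 0 by decide, zero_pow (by omega), zero_pow (by omega)] at h2
    revert hx h2
    generalize (X : ZMod 5) = x
    revert x
    decide
  · -- mod 16
    have h2 := congrArg (Int.cast : ℤ → ZMod 16) h
    push_cast at h2
    have e1 : (5 : ZMod 16) ^ (2 * s) = 9 ^ s := by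
      rw [pow_mul, show ((5:ZMod 16)^2) = 9 by decide]
    have e2 : (5 : ZMod 16) ^ (4 * s - 1) = 13 := by
      obtain ⟨t, rfl⟩ : ∃ t, s = t + 1 := ⟨s - 1, by omega⟩
      rw [show 4 * (t + 1) - 1 = 4 * t + 3 by omega, pow_add, pow_mul,
        show ((5:ZMod 16)^4) = 1 by decide, one_pow, one_mul]
      decide
    have e3 : ∀ n, (12 : ZMod 16) * 9 ^ n = 12 := by
      intro n
      induction n with
      | zero => norm_num
      | succ m ih => rw [pow_succ, ← mul_assoc, ih]; decide
    rw [e1, e2, e3] at h2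
    revert h2
    generalize (X : ZMod 16) = x
    revert x
    decide
end

section
/- Let p > 3 be a prime, let X be an odd positive integer with p ∤ X, let s be a positive integer and m a nonnegative integer. Then |45X⁴ − 60X²p^{2s} + 4p^{4s}| ≠ p^m. -/
theorem stmt_11 (p X s m : ℕ) (hp : p.Prime) (hp3 : 3 < p)
    (hX : 0 < X) (hXodd : Odd X) (hpX : ¬ p ∣ X) (hs : 0 < s) :
    |45 * (X : ℤ) ^ 4 - 60 * (X : ℤ) ^ 2 * (p : ℤ) ^ (2 * s) + 4 * (p : ℤ) ^ (4 * s)| ≠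
      (p : ℤ) ^ m := by
  intro h
  set E : ℤ := 45 * (X : ℤ) ^ 4 - 60 * (X : ℤ) ^ 2 * (p : ℤ) ^ (2 * s) + 4 * (p : ℤ) ^ (4 * s)
    with hE
  -- odd squares are 1 mod 8
  have sq8 : ∀ n : ℕ, n % 2 = 1 → ((n : ZMod 8)) ^ 2 = 1 := by
    intro n hn
    have h8 : n % 8 = 1 ∨ n % 8 = 3 ∨ n % 8 = 5 ∨ n % 8 = 7 := by omega
    rw [show ((n : ZMod 8)) = ((n % 8 : ℕ) : ZMod 8) from (ZMod.natCast_mod n 8).symm]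
    rcases h8 with h | h | h | h <;> rw [h] <;> decide
  have hXo : X % 2 = 1 := Nat.odd_iff.mp hXodd
  have hpo : p % 2 = 1 := Nat.odd_iff.mp (hp.odd_of_ne_two (by omega))
  have hX8 : ((X : ZMod 8)) ^ 2 = 1 := sq8 X hXo
  have hp8 : ((p : ZMod 8)) ^ 2 = 1 := sq8 p hpo
  have h3p : ¬ 3 ∣ p := by
    intro hd
    rcases (Nat.Prime.eq_one_or_self_of_dvd hp 3 hd) with h' | h' <;> omega
  have hp3m : p % 3 = 1 ∨ p % 3 = 2 := by omega
  have hp3sq : ((p : ZMod 3)) ^ 2 = 1 := by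
    rw [show ((p : ZMod 3)) = ((p % 3 : ℕ) : ZMod 3) from (ZMod.natCast_mod p 3).symm]
    rcases hp3m with h' | h' <;> rw [h'] <;> decide
  have h2s8 : ((p : ZMod 8)) ^ (2 * s) = 1 := by rw [pow_mul, hp8, one_pow]
  have h4s8 : ((p : ZMod 8)) ^ (4 * s) = 1 := by
    rw [show 4 * s = 2 * (2 * s) by ring, pow_mul, hp8, one_pow]
  have hX48 : ((X : ZMod 8)) ^ 4 = 1 := by
    rw [show (4 : ℕ) = 2 * 2 from rfl, pow_mul, hX8, one_pow]
  have h4s3 : ((p : ZMod 3)) ^ (4 * s) = 1 := by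
    rw [show 4 * s = 2 * (2 * s) by ring, pow_mul, hp3sq, one_pow]
  have hE8 : ((E : ZMod 8)) = 5 := by
    rw [hE]; push_cast
    rw [h2s8, h4s8, hX48, hX8]
    decide
  have hE3 : ((E : ZMod 3)) = 1 := by
    rw [hE]; push_cast
    rw [h4s3]
    have h45 : (45 : ZMod 3) = 0 := by decide
    have h60 : (60 : ZMod 3) = 0 := by decide
    rw [h45, h60]
    ring_nf
    decide
  have hEor : E = (p : ℤ) ^ m ∨ E = -((p : ℤ) ^ m) := (abs_eq (by positivity)).mp h
  by_cases hp5 : p = 5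
  · subst hp5
    have h5_8 : ((5 : ZMod 8)) ^ 2 = 1 := by decide
    have h5_3 : ((5 : ZMod 3)) ^ 2 = 1 := by decide
    rcases hEor with hEe | hEe
    · rw [hEe] at hE8 hE3
      push_cast at hE8 hE3
      rcases Nat.even_or_odd m with ⟨t, ht⟩ | ⟨t, ht⟩
      · rw [ht, ← two_mul, pow_mul, h5_8, one_pow] at hE8
        exact absurd hE8 (by decide)
      · rw [ht, pow_add, pow_mul, h5_3, one_pow, pow_one] at hE3
        exact absurd hE3 (by decide)
    · rw [hEe] at hE8
      push_cast at hE8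
      rcases Nat.even_or_odd m with ⟨t, ht⟩ | ⟨t, ht⟩
      · rw [ht, ← two_mul, pow_mul, h5_8, one_pow] at hE8
        exact absurd hE8 (by decide)
      · rw [ht, pow_add, pow_mul, h5_8, one_pow, pow_one] at hE8
        exact absurd hE8 (by decide)
  · have hpint : Prime (p : ℤ) := Nat.prime_iff_prime_int.mp hp
    have hndvd : ¬ (p : ℤ) ∣ E := by
      intro hd
      have h1 : (p : ℤ) ∣ (p : ℤ) ^ (2 * s) := dvd_pow_self _ (by omega)
      have h2 : (p : ℤ) ∣ (p : ℤ) ^ (4 * s) := dvd_pow_self _ (by omega)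
      have h3 : (p : ℤ) ∣ 45 * (X : ℤ) ^ 4 := by
        have heq : 45 * (X : ℤ) ^ 4 =
            E + 60 * (X : ℤ) ^ 2 * (p : ℤ) ^ (2 * s) - 4 * (p : ℤ) ^ (4 * s) := by
          rw [hE]; ring
        rw [heq]
        exact dvd_sub (dvd_add hd (h1.mul_left _)) (h2.mul_left _)
      rcases hpint.dvd_mul.mp h3 with h4 | h4
      · have hnat : p ∣ 45 := by exact_mod_cast h4
        have hub : p ≤ 45 := Nat.le_of_dvd (by norm_num) hnat
        interval_cases p <;> revert hnat hp hp5 <;> decide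
      · exact hpX (by exact_mod_cast hpint.dvd_of_dvd_pow h4)
    have hm : m = 0 := by
      by_contra hm
      apply hndvd
      have hd : (p : ℤ) ∣ (p : ℤ) ^ m := dvd_pow_self _ hm
      rw [← h] at hd
      exact (dvd_abs _ _).mp hd
    rw [hm, pow_zero] at hEor
    rcases hEor with hEe | hEe <;> rw [hEe] at hE8 <;> push_cast at hE8 <;>
      exact absurd hE8 (by decide)
end

section
/- Let n be an odd prime and let a, b be odd positive integers. If |∑_{i=0}^{(n−1)/2} C(n, 2i+1) · (3a²)^{(n−1)/2−i} · (−2)^i| = |∑_{i=0}^{(n−1)/2} C(n, 2i+1) · (3b²)^{(n−1)/2−i} · (−2)^i|, then a = b. -/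
/-!
Write `n = 2m + 1` and `S(x)` for the sum with `x = a²`. Modulo 3 only the top term survives,
so `S(x) ≡ (-2)^m ≡ 1` and the absolute values can be dropped. For odd squares `t ≠ s` we have
`4 ∣ t - s`, and in `S(t) - S(s) = ∑ C(2m+1, 2i+1) 3^(m-i) (-2)^i (t^(m-i) - s^(m-i))` lifting
the exponent gives the `i = 0` term 2-adic valuation exactly `ν₂(m) + ν₂(t - s)`, while for
`i ≥ 1` the factor `(-2)^i` together with `2^ν₂(m) ∣ C(2m+1, 2i+1) (m - i)` makes the valuation
strictly larger. Hence `S(t) ≠ S(s)`.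
-/

open Finset

/-- The coefficient of `√-2` in `(√(3x) + √-2)^(2m+1)`. -/
def oddBinomSum (m : ℕ) (x : ℤ) : ℤ :=
  ∑ i ∈ range (m + 1), ((2 * m + 1).choose (2 * i + 1) : ℤ) * (3 * x) ^ (m - i) * (-2) ^ i

theorem oddBinomSum_modEq_one (m : ℕ) (x : ℤ) : oddBinomSum m x ≡ 1 [ZMOD 3] := by
  refine (ZMod.intCast_eq_intCast_iff _ _ 3).mp ?_
  have h3 : (3 : ZMod 3) = 0 := rfl
  have h2 : (-2 : ZMod 3) = 1 := rfl
  push_cast [oddBinomSum]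
  rw [sum_range_succ, sum_eq_zero fun i hi => ?_]
  · simp [h2]
  · have : m - i ≠ 0 := by have := mem_range.mp hi; omega
    rw [h3, zero_mul, zero_pow this, mul_zero, zero_mul]

theorem eq_of_abs_eq_of_modEq_one {A B : ℤ} (hA : A ≡ 1 [ZMOD 3]) (hB : B ≡ 1 [ZMOD 3])
    (h : |A| = |B|) : A = B := by
  rcases abs_eq_abs.mp h with h | h
  · exact h
  · unfold Int.ModEq at hA hB; omega

theorem Nat.two_mul_add_one_choose_mul (m i : ℕ) :
    (2 * m + 1).choose (2 * i + 1) * (2 * i + 1) * (m - i) =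
      (2 * m + 1) * m * (2 * m - 1).choose (2 * i) := by
  rcases m with _ | k
  · simp
  · have h1 := Nat.add_one_mul_choose_eq (2 * k + 2) (2 * i)
    have h2 := Nat.choose_mul_succ_eq (2 * k + 1) (2 * i)
    have h3 : 2 * (k + 1 - i) = 2 * k + 1 + 1 - 2 * i := by omega
    apply Nat.eq_of_mul_eq_mul_left two_pos
    calc 2 * ((2 * (k + 1) + 1).choose (2 * i + 1) * (2 * i + 1) * (k + 1 - i))
        = (2 * k + 3) * ((2 * k + 2).choose (2 * i) * (2 * k + 1 + 1 - 2 * i)) := by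
          rw [mul_left_comm, h3, show 2 * (k + 1) + 1 = 2 * k + 2 + 1 by ring, ← h1]; ring
      _ = 2 * ((2 * (k + 1) + 1) * (k + 1) * (2 * (k + 1) - 1).choose (2 * i)) := by
          rw [← h2, show 2 * (k + 1) - 1 = 2 * k + 1 by omega]; ring

theorem sum_range_succ_ne_zero_of_emultiplicity {R : Type*} [CommRing R] {p : R} {f : ℕ → R}
    {m k : ℕ} (h0 : emultiplicity p (f 0) = k)
    (h : ∀ i ∈ range m, (k + 1 : ℕ) ≤ emultiplicity p (f (i + 1))) :
    ∑ i ∈ range (m + 1), f i ≠ 0 := by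
  intro hsum
  have htail : p ^ (k + 1) ∣ ∑ i ∈ range m, f (i + 1) :=
    dvd_sum fun i hi => pow_dvd_of_le_emultiplicity (h i hi)
  have hf0 : p ^ (k + 1) ∣ f 0 := by
    rw [sum_range_succ'] at hsum
    exact (dvd_add_right htail).mp (hsum ▸ dvd_zero _)
  have := le_emultiplicity_of_pow_dvd hf0
  rw [h0, Nat.cast_le] at this
  omega

theorem oddBinomSum_sub_oddBinomSum (m : ℕ) (t s : ℤ) :
    oddBinomSum m t - oddBinomSum m s = ∑ i ∈ range (m + 1),
      ((2 * m + 1).choose (2 * i + 1) : ℤ) * 3 ^ (m - i) * (-2) ^ i *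
        (t ^ (m - i) - s ^ (m - i)) := by
  rw [oddBinomSum, oddBinomSum, ← sum_sub_distrib]
  exact sum_congr rfl fun i _ => by ring

theorem Int.emultiplicity_two_eq_zero_of_odd {x : ℤ} (hx : Odd x) : emultiplicity 2 x = 0 :=
  emultiplicity_eq_zero.mpr fun h => Int.not_even_iff_odd.mpr hx (even_iff_two_dvd.mpr h)

theorem emultiplicity_two_le_choose_mul_sub (m i : ℕ) :
    emultiplicity (2 : ℤ) m ≤
      emultiplicity 2 (((2 * m + 1).choose (2 * i + 1) * (m - i) : ℕ) : ℤ) := by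
  have hdvd : m ∣ (2 * m + 1).choose (2 * i + 1) * (m - i) * (2 * i + 1) :=
    ⟨(2 * m + 1) * (2 * m - 1).choose (2 * i), by
      rw [mul_right_comm, Nat.two_mul_add_one_choose_mul]; ring⟩
  have hodd : emultiplicity (2 : ℤ) ((2 * i + 1 : ℕ) : ℤ) = 0 :=
    Int.emultiplicity_two_eq_zero_of_odd (by exact_mod_cast odd_two_mul_add_one i)
  calc emultiplicity (2 : ℤ) m
      ≤ emultiplicity 2 (((2 * m + 1).choose (2 * i + 1) * (m - i) * (2 * i + 1) : ℕ) : ℤ) :=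
        emultiplicity_le_emultiplicity_of_dvd_right (Int.natCast_dvd_natCast.mpr hdvd)
    _ = _ := by
      rw [Nat.cast_mul _ (2 * i + 1), emultiplicity_mul Int.prime_two, hodd, add_zero]

theorem emultiplicity_two_oddBinomSum_sub_term {t s : ℤ} (h4 : 4 ∣ t - s) (ht : ¬ 2 ∣ t)
    (m i : ℕ) :
    emultiplicity (2 : ℤ) (((2 * m + 1).choose (2 * i + 1) : ℤ) * 3 ^ (m - i) * (-2) ^ i *
      (t ^ (m - i) - s ^ (m - i))) =
      emultiplicity (2 : ℤ) (((2 * m + 1).choose (2 * i + 1) * (m - i) : ℕ) : ℤ) +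
        emultiplicity 2 (t - s) + i := by
  have h2 : emultiplicity (2 : ℤ) 2 = 1 := by
    simpa using emultiplicity_pow_self_of_prime Int.prime_two 1
  have h3 : emultiplicity (2 : ℤ) (3 ^ (m - i)) = 0 :=
    Int.emultiplicity_two_eq_zero_of_odd (by decide : Odd (3 : ℤ)).pow
  simp only [emultiplicity_mul Int.prime_two, Int.two_pow_sub_pow' _ h4 ht, h3,
    emultiplicity_pow Int.prime_two, emultiplicity_neg, h2, Nat.cast_mul]
  ring


theorem oddBinomSum_ne_oddBinomSum {m : ℕ} (hm : m ≠ 0) {t s : ℤ} (hts : t ≠ s)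
    (h4 : 4 ∣ t - s) (ht : ¬ 2 ∣ t) : oddBinomSum m t ≠ oddBinomSum m s := by
  rw [← sub_ne_zero, oddBinomSum_sub_oddBinomSum]
  have hfin : emultiplicity (2 : ℤ) m + emultiplicity 2 (t - s) ≠ ⊤ := by
    refine WithTop.add_ne_top.mpr ⟨?_, ?_⟩ <;>
      refine finiteMultiplicity_iff_emultiplicity_ne_top.mp
        (Int.finiteMultiplicity_iff.mpr ⟨by norm_num, ?_⟩)
    exacts [by exact_mod_cast hm, sub_ne_zero.mpr hts]
  obtain ⟨k, hk⟩ := ENat.ne_top_iff_exists.mp hfin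
  apply sum_range_succ_ne_zero_of_emultiplicity (k := k)
  · rw [emultiplicity_two_oddBinomSum_sub_term h4 ht, Nat.choose_one_right, Nat.sub_zero,
      Nat.cast_mul, emultiplicity_mul Int.prime_two, Int.emultiplicity_two_eq_zero_of_odd (by simp),
      zero_add, Nat.cast_zero, add_zero, hk]
  · intro i _
    rw [emultiplicity_two_oddBinomSum_sub_term h4 ht, Nat.cast_succ, hk]
    gcongr
    · exact emultiplicity_two_le_choose_mul_sub m (i + 1)
    · exact_mod_cast Nat.succ_pos i

theorem stmt_12_general (n a b : ℕ) (hn : n.Prime) (hnodd : Odd n)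
    (haodd : Odd a) (hbodd : Odd b)
    (h : |∑ i ∈ Finset.range ((n - 1) / 2 + 1),
        (n.choose (2 * i + 1) : ℤ) * (3 * (a : ℤ) ^ 2) ^ ((n - 1) / 2 - i) * (-2) ^ i| =
      |∑ i ∈ Finset.range ((n - 1) / 2 + 1),
        (n.choose (2 * i + 1) : ℤ) * (3 * (b : ℤ) ^ 2) ^ ((n - 1) / 2 - i) * (-2) ^ i|) :
    a = b := by
  obtain ⟨m, rfl⟩ := hnodd
  have hm : m ≠ 0 := by rintro rfl; exact Nat.not_prime_one hn
  rw [show (2 * m + 1 - 1) / 2 = m by omega] at h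
  have heq : oddBinomSum m ((a : ℤ) ^ 2) = oddBinomSum m ((b : ℤ) ^ 2) :=
    eq_of_abs_eq_of_modEq_one (oddBinomSum_modEq_one _ _) (oddBinomSum_modEq_one _ _) h
  have ha4 := Int.sq_mod_four_eq_one_of_odd (x := a) (by exact_mod_cast haodd)
  have hb4 := Int.sq_mod_four_eq_one_of_odd (x := b) (by exact_mod_cast hbodd)
  by_contra hab
  refine oddBinomSum_ne_oddBinomSum hm (fun hsq => hab ?_) (by omega) (by omega) heq
  exact Nat.pow_left_injective two_ne_zero (by exact_mod_cast hsq)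

theorem stmt_12 (n a b : ℕ) (hn : n.Prime) (hnodd : Odd n)
    (ha : 0 < a) (hb : 0 < b) (haodd : Odd a) (hbodd : Odd b)
    (h : |∑ i ∈ Finset.range ((n - 1) / 2 + 1),
        (n.choose (2 * i + 1) : ℤ) * (3 * (a : ℤ) ^ 2) ^ ((n - 1) / 2 - i) * (-2) ^ i| =
      |∑ i ∈ Finset.range ((n - 1) / 2 + 1),
        (n.choose (2 * i + 1) : ℤ) * (3 * (b : ℤ) ^ 2) ^ ((n - 1) / 2 - i) * (-2) ^ i|) :
    a = b :=
  stmt_12_general n a b hn hnodd haodd hbodd h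
end

section
/- Let n be odd with exact 2-adic valuation y ≥ 2 of n − 1, let X and Y be odd integers with X ≡ Y (mod 8), and let j ≥ 2 be an integer with j ≤ (n−1)/2. Then 2^y divides C((n−1)/2, j) · (X − Y)^{j−1} · Y^{(n−1)/2 − j}. -/
theorem stmt_15 (n y : ℕ) (hnodd : Odd n) (hy : 2 ≤ y)
    (hval : 2 ^ y ∣ n - 1) (hval' : ¬ 2 ^ (y + 1) ∣ n - 1)
    (X Y : ℤ) (hX : Odd X) (hY : Odd Y) (hmod : X ≡ Y [ZMOD 8])
    (j : ℕ) (hj : 2 ≤ j) (hj' : j ≤ (n - 1) / 2) :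
    (2 : ℤ) ^ y ∣ (((n - 1) / 2).choose j : ℤ) * (X - Y) ^ (j - 1) *
      Y ^ ((n - 1) / 2 - j) := by
  set m := (n - 1) / 2 with hm
  -- 2^(y-1) ∣ m
  obtain ⟨k, hk⟩ := hval
  have hmk : m = 2 ^ (y - 1) * k := by
    rw [hm, hk, show (2:ℕ) ^ y = 2 * 2 ^ (y - 1) by
      rw [← pow_succ']; congr 1; omega, mul_assoc,
      Nat.mul_div_cancel_left _ two_pos]
  have hmdvd : 2 ^ (y - 1) ∣ m := ⟨k, hmk⟩
  have hm1 : 1 ≤ m := by omega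
  have hj0 : j ≠ 0 := by omega
  -- key identity: m * choose (m-1) (j-1) = choose m j * j
  have hid : m * Nat.choose (m - 1) (j - 1) = Nat.choose m j * j := by
    have := Nat.add_one_mul_choose_eq (m - 1) (j - 1)
    have h1 : m - 1 + 1 = m := by omega
    have h2 : j - 1 + 1 = j := by omega
    rwa [h1, h2] at this
  have hCj : 2 ^ (y - 1) ∣ Nat.choose m j * j := by
    rw [← hid]; exact hmdvd.mul_right _
  -- 2-adic valuation of j
  have hfact : Fact (Nat.Prime 2) := ⟨Nat.prime_two⟩
  set t := padicValNat 2 j with ht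
  have hC0 : Nat.choose m j ≠ 0 := (Nat.choose_pos hj').ne'
  have hval_mul : padicValNat 2 (Nat.choose m j * j) =
      padicValNat 2 (Nat.choose m j) + t := padicValNat.mul hC0 hj0
  have hyle : y - 1 ≤ padicValNat 2 (Nat.choose m j) + t := by
    rw [← hval_mul]
    exact (padicValNat_dvd_iff_le (by positivity)).mp hCj
  -- t < j
  have h2t : 2 ^ t ∣ j := pow_padicValNat_dvd
  have htj : t < j := lt_of_lt_of_le (Nat.lt_two_pow_self (n := t)) (Nat.le_of_dvd (by omega) h2t)
  -- 2^(y-1-t) ∣ choose m j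
  have hCdvd : (2 : ℤ) ^ (y - 1 - t) ∣ (Nat.choose m j : ℤ) := by
    have : 2 ^ (y - 1 - t) ∣ Nat.choose m j :=
      dvd_trans (pow_dvd_pow 2 (by omega)) pow_padicValNat_dvd
    exact_mod_cast Int.natCast_dvd_natCast.mpr this
  -- 8 ∣ X - Y
  have h8 : (8 : ℤ) ∣ X - Y := (Int.ModEq.dvd hmod.symm)
  have hXY : (2 : ℤ) ^ (3 * (j - 1)) ∣ (X - Y) ^ (j - 1) := by
    have : ((2 : ℤ) ^ 3) ^ (j - 1) ∣ (X - Y) ^ (j - 1) :=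
      pow_dvd_pow_of_dvd (by norm_num [h8]) _
    rwa [← pow_mul] at this
  have hmain : (2 : ℤ) ^ (y - 1 - t + 3 * (j - 1)) ∣
      (Nat.choose m j : ℤ) * (X - Y) ^ (j - 1) := by
    rw [pow_add]
    exact mul_dvd_mul hCdvd hXY
  have hexp : y ≤ y - 1 - t + 3 * (j - 1) := by omega
  exact dvd_mul_of_dvd_left (dvd_trans (pow_dvd_pow 2 hexp) hmain) _
end

section
/- Let X₁ and Y₁ be coprime positive integers with X₁ odd. Then the complex number θ = (X₁√3 + Y₁√2·i) / (X₁√3 − Y₁√2·i) is not a root of unity, i.e., there is no positive integer m with θ^m = 1. -/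
theorem stmt_16 (X₁ Y₁ : ℕ) (hX : 0 < X₁) (hY : 0 < Y₁)
    (hcop : Nat.Coprime X₁ Y₁) (hXodd : Odd X₁) :
    ¬ ∃ m : ℕ, 0 < m ∧
      (((X₁ : ℂ) * (Real.sqrt 3 : ℝ) + (Y₁ : ℂ) * (Real.sqrt 2 : ℝ) * Complex.I) /
       ((X₁ : ℂ) * (Real.sqrt 3 : ℝ) - (Y₁ : ℂ) * (Real.sqrt 2 : ℝ) * Complex.I)) ^ m = 1 := by
  rintro ⟨m, hm, hθ⟩
  set n : ℂ := (X₁ : ℂ) * (Real.sqrt 3 : ℝ) + (Y₁ : ℂ) * (Real.sqrt 2 : ℝ) * Complex.I with hn_def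
  set d : ℂ := (X₁ : ℂ) * (Real.sqrt 3 : ℝ) - (Y₁ : ℂ) * (Real.sqrt 2 : ℝ) * Complex.I with hd_def
  have h3 : ((Real.sqrt 3 : ℝ) : ℂ) ^ 2 = 3 := by
    rw [← Complex.ofReal_pow, Real.sq_sqrt (by norm_num : (0:ℝ) ≤ 3)]; norm_num
  have h2 : ((Real.sqrt 2 : ℝ) : ℂ) ^ 2 = 2 := by
    rw [← Complex.ofReal_pow, Real.sq_sqrt (by norm_num : (0:ℝ) ≤ 2)]; norm_num
  have hnd : n * d = 3 * (X₁:ℂ)^2 + 2 * (Y₁:ℂ)^2 := by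
    simp only [hn_def, hd_def]
    linear_combination (X₁:ℂ)^2 * h3 - (Y₁:ℂ)^2 * Complex.I^2 * h2 - 2*(Y₁:ℂ)^2 * Complex.I_sq
  have hsq : n^2 + d^2 = 6 * (X₁:ℂ)^2 - 4 * (Y₁:ℂ)^2 := by
    simp only [hn_def, hd_def]
    linear_combination 2*(X₁:ℂ)^2 * h3 + 2*(Y₁:ℂ)^2 * Complex.I^2 * h2 + 4*(Y₁:ℂ)^2 * Complex.I_sq
  have hX1 : (1:ℝ) ≤ (X₁:ℝ) := by exact_mod_cast hX
  have hY1 : (1:ℝ) ≤ (Y₁:ℝ) := by exact_mod_cast hY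
  have hposR : (0:ℝ) < 3*(X₁:ℝ)^2 + 2*(Y₁:ℝ)^2 := by nlinarith
  have hN0 : (3 * (X₁:ℂ)^2 + 2 * (Y₁:ℂ)^2) ≠ 0 := by
    have hc : ((3*(X₁:ℝ)^2 + 2*(Y₁:ℝ)^2 : ℝ) : ℂ) = 3 * (X₁:ℂ)^2 + 2 * (Y₁:ℂ)^2 := by
      push_cast; ring
    rw [← hc]
    exact Complex.ofReal_ne_zero.mpr hposR.ne'
  have hd0 : d ≠ 0 := fun h => hN0 (by rw [← hnd, h, mul_zero])
  have hn0 : n ≠ 0 := fun h => hN0 (by rw [← hnd, h, zero_mul])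
  have hconj : (starRingEnd ℂ) (n / d) = d / n := by
    simp only [hn_def, hd_def, map_div₀, map_add, map_sub, map_mul, Complex.conj_ofReal,
      Complex.conj_I, Complex.conj_natCast]
    ring
  have hint1 : IsIntegral ℤ (n / d) := by
    refine IsIntegral.of_pow hm ?_
    rw [hθ]; exact isIntegral_one
  have hint2 : IsIntegral ℤ (d / n) := by
    rw [← hconj]
    refine IsIntegral.of_pow hm ?_
    rw [← map_pow, hθ, map_one]; exact isIntegral_one
  have hint : IsIntegral ℤ (n / d + d / n) := hint1.add hint2
  have key : n / d + d / n = (6 * (X₁:ℂ)^2 - 4 * (Y₁:ℂ)^2) / (3 * (X₁:ℂ)^2 + 2 * (Y₁:ℂ)^2) := by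
    rw [div_add_div _ _ hd0 hn0, show n*n + d*d = n^2 + d^2 by ring, hsq,
      show d*n = n*d by ring, hnd]
  have hDQ : (3*(X₁:ℚ)^2 + 2*(Y₁:ℚ)^2) ≠ 0 := by
    have : (0:ℚ) < 3*(X₁:ℚ)^2 + 2*(Y₁:ℚ)^2 := by
      have hX1' : (1:ℚ) ≤ (X₁:ℚ) := by exact_mod_cast hX
      have hY1' : (1:ℚ) ≤ (Y₁:ℚ) := by exact_mod_cast hY
      nlinarith
    exact this.ne'
  set q : ℚ := (6*(X₁:ℚ)^2 - 4*(Y₁:ℚ)^2) / (3*(X₁:ℚ)^2 + 2*(Y₁:ℚ)^2) with hq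
  have hqC : ((q : ℚ) : ℂ) = n / d + d / n := by
    rw [key, hq]; push_cast; ring
  have hqint : IsIntegral ℤ q := by
    have h1 : IsIntegral ℤ ((algebraMap ℚ ℂ) q) := by
      rw [eq_ratCast (algebraMap ℚ ℂ) q, hqC]; exact hint
    exact (isIntegral_algebraMap_iff (algebraMap ℚ ℂ).injective).mp h1
  obtain ⟨k, hk⟩ := IsIntegrallyClosed.isIntegral_iff.mp hqint
  have hkq : (k:ℚ) = q := by rw [← hk, eq_intCast]
  have hk' : (k:ℚ) * (3*(X₁:ℚ)^2 + 2*(Y₁:ℚ)^2) = 6*(X₁:ℚ)^2 - 4*(Y₁:ℚ)^2 := by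
    rw [hkq, hq, div_mul_cancel₀ _ hDQ]
  have hkZ : k * (3*(X₁:ℤ)^2 + 2*(Y₁:ℤ)^2) = 6*(X₁:ℤ)^2 - 4*(Y₁:ℤ)^2 := by
    exact_mod_cast hk'
  have hXZ : (1:ℤ) ≤ (X₁:ℤ) := by exact_mod_cast hX
  have hYZ : (1:ℤ) ≤ (Y₁:ℤ) := by exact_mod_cast hY
  have hD : (0:ℤ) < 3*(X₁:ℤ)^2 + 2*(Y₁:ℤ)^2 := by nlinarith
  have hklt : k < 2 := by nlinarith
  have hkgt : -2 < k := by nlinarith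
  have hoa : Odd ((X₁:ℤ)^2) := by
    have : Odd ((X₁:ℤ)) := by exact_mod_cast hXodd
    exact this.pow
  generalize hA : (X₁:ℤ)^2 = a at hkZ hoa
  generalize hB : (Y₁:ℤ)^2 = b at hkZ
  obtain ⟨t, ht⟩ := hoa
  interval_cases k <;> omega
end

section
/- The only positive integers X and k with k ≥ 0 satisfying 9X² − 2^{2k+1} = 1 or 9X² − 2^{2k+1} = −1 are X = 1 and k = 1. -/
theorem stmt_17 (X k : ℕ) (hX : 0 < X)
    (h : 9 * (X : ℤ) ^ 2 - 2 ^ (2 * k + 1) = 1 ∨ 9 * (X : ℤ) ^ 2 - 2 ^ (2 * k + 1) = -1) :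
    X = 1 ∧ k = 1 := by
  rcases h with h | h
  · -- 9X² = 2^(2k+1)+1, so (3X-1)(3X+1) = 2^(2k+1)
    have hx1 : 1 ≤ 3 * X := by omega
    have hab : (3 * X - 1) * (3 * X + 1) = 2 ^ (2 * k + 1) := by
      have hz : ((3 * X - 1 : ℕ) : ℤ) = 3 * (X : ℤ) - 1 := by push_cast [hx1]; ring
      have : ((3 * X - 1) * (3 * X + 1) : ℕ) = ((2 ^ (2 * k + 1) : ℕ) : ℤ) := by
        push_cast [hz]; nlinarith [h]
      exact_mod_cast this
    have ha : (3 * X - 1) ∣ 2 ^ (2 * k + 1) := ⟨_, hab.symm⟩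
    have hb : (3 * X + 1) ∣ 2 ^ (2 * k + 1) := ⟨_, by rw [mul_comm] at hab; exact hab.symm⟩
    obtain ⟨i, hi, hai⟩ := (Nat.dvd_prime_pow Nat.prime_two).mp ha
    obtain ⟨j, hj, hbj⟩ := (Nat.dvd_prime_pow Nat.prime_two).mp hb
    have hij : 2 ^ j = 2 ^ i + 2 := by omega
    have hia : 2 ≤ 2 ^ i := by omega
    have hi1 : i = 1 := by
      rcases Nat.lt_or_ge i 2 with h' | h'
      · interval_cases i <;> omega
      · exfalso
        have h4i : (4 : ℕ) ∣ 2 ^ i := by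
          calc (4:ℕ) = 2 ^ 2 := by norm_num
          _ ∣ 2 ^ i := pow_dvd_pow 2 h'
        have hj3 : 3 ≤ j := by
          by_contra hc
          have : 2 ^ j ≤ 2 ^ 2 := Nat.pow_le_pow_right (by norm_num) (by omega)
          omega
        have h4j : (4 : ℕ) ∣ 2 ^ j := by
          calc (4:ℕ) = 2 ^ 2 := by norm_num
          _ ∣ 2 ^ j := pow_dvd_pow 2 (by omega)
        omega
    subst hi1
    have hj2 : j = 2 := by
      have : 2 ^ j = 2 ^ 2 := by norm_num at hij ⊢; omega
      exact Nat.pow_right_injective (by norm_num) this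
    subst hj2
    have hX1 : X = 1 := by omega
    have hpow : 2 ^ (2 * k + 1) = 2 ^ 3 := by
      rw [← hab, hai, hbj]; norm_num
    have hk : 2 * k + 1 = 3 := Nat.pow_right_injective (by norm_num) hpow
    exact ⟨hX1, by omega⟩
  · -- 2^(2k+1) = 9X²+1 ≡ 1 mod 3, impossible
    exfalso
    have h3 : ((9 * (X : ℤ) ^ 2 - 2 ^ (2 * k + 1) : ℤ) : ZMod 3) = ((-1 : ℤ) : ZMod 3) := by
      rw [h]
    push_cast at h3
    have h9 : (9 : ZMod 3) = 0 := by decide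
    rw [h9] at h3
    have h2 : (2 : ZMod 3) ^ (2 * k + 1) = 2 := by
      rw [pow_succ, pow_mul]
      have h4 : ((2:ZMod 3) ^ 2) = 1 := by decide
      rw [h4, one_pow, one_mul]
    rw [h2] at h3
    have : (0 : ZMod 3) * (X:ZMod 3)^2 - 2 = -1 := h3
    simp at this
    exact absurd this (by decide)
end
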